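/- arXiv:1711.08746 — 10 statements merged into one kernel-verified Lean document; each statement's English description precedes it below -/
import Mathlib

section
/- Let (V, ρ) be a real vector space with a translation invariant balanced metric (ρ(λf, 0) ≤ ρ(f, 0) for |λ| ≤ 1 and ρ(f+h, g+h) = ρ(f,g)) such that scalar multiplication is continuous at 0. If (fₙ) converges to f in (V, ρ), then there exists a subsequence (f_{n_k}) such that for every further subsequence (f_{n_{k_l}}), the Cesàro means (1/N) Σ_{l=1}^N f_{n_{k_l}} converge to f with respect to ρ. -/
/-!
Pass to a subsequence with `ρ(f (φ n), g) < 2⁻ⁿ`. For a further subsequence `ψ` the deviations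
`x l = f (φ (ψ l)) - g` then satisfy `ρ(x l, 0) < 2⁻ˡ`, a summable bound. Since `ρ(·, 0)` is
subadditive and does not grow under scalars of modulus `≤ 1`, the Cesàro mean of `x` splits into
`(N + 1)⁻¹ • (x 0 + ⋯ + x (M - 1))`, which tends to `0` by continuity of scalar multiplication,
and a tail bounded by `∑_{l ≥ M} ρ(x l, 0)`, which is small once `M` is large.
-/

open Filter Topology Finset

section TranslationInvariantMetric

variable {V : Type*} [AddCommGroup V] [MetricSpace V]

theorem dist_sub_zero_of_add_invariant (htrans : ∀ f g h : V, dist (f + h) (g + h) = dist f g)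
    (a b : V) : dist (a - b) 0 = dist a b := by
  simpa using (htrans (a - b) 0 b).symm

theorem dist_add_zero_le_of_add_invariant
    (htrans : ∀ f g h : V, dist (f + h) (g + h) = dist f g) (a b : V) :
    dist (a + b) 0 ≤ dist a 0 + dist b 0 :=
  calc dist (a + b) 0 ≤ dist (a + b) b + dist b 0 := dist_triangle _ _ _
    _ = dist a 0 + dist b 0 := by
      rw [← dist_sub_zero_of_add_invariant htrans, add_sub_cancel_right]

theorem dist_sum_zero_le_of_add_invariant
    (htrans : ∀ f g h : V, dist (f + h) (g + h) = dist f g) {ι : Type*} (s : Finset ι)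
    (x : ι → V) : dist (∑ i ∈ s, x i) 0 ≤ ∑ i ∈ s, dist (x i) 0 :=
  le_sum_of_subadditive (fun v : V => dist v 0) (dist_self _).le
    (dist_add_zero_le_of_add_invariant htrans) s x

theorem tendsto_of_tendsto_sub_zero_of_add_invariant
    (htrans : ∀ f g h : V, dist (f + h) (g + h) = dist f g) {α : Type*} {l : Filter α}
    {u : α → V} {g : V} (h : Tendsto (fun n => u n - g) l (𝓝 0)) : Tendsto u l (𝓝 g) := by
  rw [tendsto_iff_dist_tendsto_zero] at h ⊢
  simpa only [dist_sub_zero_of_add_invariant htrans] using h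

variable [Module ℝ V]

theorem dist_inv_smul_sum_range_zero_le
    (htrans : ∀ f g h : V, dist (f + h) (g + h) = dist f g)
    (hbal : ∀ (l : ℝ) (f : V), |l| ≤ 1 → dist (l • f) 0 ≤ dist f 0)
    (x : ℕ → V) {M N : ℕ} (hMN : M ≤ N + 1) :
    dist (((N + 1 : ℝ))⁻¹ • ∑ l ∈ range (N + 1), x l) 0 ≤
      dist (((N + 1 : ℝ))⁻¹ • ∑ l ∈ range M, x l) 0 + ∑ l ∈ Ico M (N + 1), dist (x l) 0 := by
  have hinv : |((N + 1 : ℝ))⁻¹| ≤ 1 := by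
    rw [abs_of_pos (by positivity)]
    exact inv_le_one_of_one_le₀ (by simp)
  rw [← sum_range_add_sum_Ico _ hMN, smul_add, smul_sum (s := Ico M (N + 1))]
  grw [dist_add_zero_le_of_add_invariant htrans, dist_sum_zero_le_of_add_invariant htrans]
  gcongr with l
  exact hbal _ _ hinv

theorem tendsto_inv_smul_sum_range_of_summable
    (htrans : ∀ f g h : V, dist (f + h) (g + h) = dist f g)
    (hbal : ∀ (l : ℝ) (f : V), |l| ≤ 1 → dist (l • f) 0 ≤ dist f 0)
    (hsmul : ∀ f : V, Tendsto (fun c : ℝ => c • f) (𝓝 0) (𝓝 (0 : V)))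
    {x : ℕ → V} (hx : Summable fun l => dist (x l) 0) :
    Tendsto (fun N : ℕ => ((N + 1 : ℝ))⁻¹ • ∑ l ∈ range (N + 1), x l) atTop (𝓝 0) := by
  rw [Metric.tendsto_atTop]
  intro ε hε
  obtain ⟨M, hM⟩ : ∃ M, ∑' k, dist (x (k + M)) 0 < ε / 2 :=
    ((tendsto_sum_nat_add fun l => dist (x l) 0).eventually (gt_mem_nhds (half_pos hε))).exists
  have hhead : Tendsto (fun N : ℕ => ((N + 1 : ℝ))⁻¹ • ∑ l ∈ range M, x l) atTop (𝓝 0) :=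
    (hsmul _).comp (by simpa only [one_div] using tendsto_one_div_add_atTop_nhds_zero_nat (𝕜 := ℝ))
  obtain ⟨N₀, hN₀⟩ := Metric.tendsto_atTop.mp hhead (ε / 2) (half_pos hε)
  refine ⟨max N₀ M, fun N hN => ?_⟩
  have htail : ∑ l ∈ Ico M (N + 1), dist (x l) 0 ≤ ∑' k, dist (x (k + M)) 0 := by
    rw [sum_Ico_eq_sum_range]
    simp_rw [add_comm M]
    exact ((summable_nat_add_iff M).mpr hx).sum_le_tsum _ fun _ _ => dist_nonneg
  calc dist (((N + 1 : ℝ))⁻¹ • ∑ l ∈ range (N + 1), x l) 0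
      ≤ dist (((N + 1 : ℝ))⁻¹ • ∑ l ∈ range M, x l) 0 + ∑ l ∈ Ico M (N + 1), dist (x l) 0 :=
        dist_inv_smul_sum_range_zero_le htrans hbal x (by omega)
    _ < ε / 2 + ε / 2 := add_lt_add (hN₀ N (le_of_max_le_left hN)) (htail.trans_lt hM)
    _ = ε := add_halves ε

end TranslationInvariantMetric

theorem inv_smul_sum_range_sub_const {𝕜 E : Type*} [DivisionRing 𝕜] [CharZero 𝕜]
    [AddCommGroup E] [Module 𝕜 E] (y : ℕ → E) (g : E) (N : ℕ) :
    ((N + 1 : 𝕜))⁻¹ • ∑ l ∈ range (N + 1), (y l - g) =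
      ((N + 1 : 𝕜))⁻¹ • ∑ l ∈ range (N + 1), y l - g := by
  rw [sum_sub_distrib, sum_const, card_range, smul_sub, ← Nat.cast_smul_eq_nsmul 𝕜,
    Nat.cast_add_one, inv_smul_smul₀ (Nat.cast_add_one_ne_zero N)]

theorem stmt1 {V : Type*} [AddCommGroup V] [Module ℝ V] [MetricSpace V]
    (htrans : ∀ f g h : V, dist (f + h) (g + h) = dist f g)
    (hbal : ∀ (l : ℝ) (f : V), |l| ≤ 1 → dist (l • f) 0 ≤ dist f 0)
    (hsmul : ∀ f : V, Tendsto (fun c : ℝ => c • f) (nhds 0) (nhds (0 : V)))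
    (f : ℕ → V) (g : V) (hf : Tendsto f atTop (nhds g)) :
    ∃ φ : ℕ → ℕ, StrictMono φ ∧ ∀ ψ : ℕ → ℕ, StrictMono ψ →
      Tendsto (fun N : ℕ => ((N + 1 : ℝ))⁻¹ •
          ∑ l ∈ Finset.range (N + 1), f (φ (ψ l)))
        atTop (nhds g) := by
  obtain ⟨φ, hφ, hφf⟩ := extraction_forall_of_eventually fun k =>
    Metric.tendsto_nhds.mp hf ((1 / 2 : ℝ) ^ k) (by positivity)
  refine ⟨φ, hφ, fun ψ hψ => ?_⟩
  have hsummable : Summable fun l => dist (f (φ (ψ l)) - g) 0 := by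
    refine .of_nonneg_of_le (fun _ => dist_nonneg) (fun l => ?_)
      (summable_geometric_of_lt_one (by norm_num) (by norm_num : (1 / 2 : ℝ) < 1))
    rw [dist_sub_zero_of_add_invariant htrans]
    exact (hφf (ψ l)).le.trans (pow_le_pow_of_le_one (by norm_num) (by norm_num) hψ.le_apply)
  refine tendsto_of_tendsto_sub_zero_of_add_invariant htrans ?_
  simpa only [inv_smul_sum_range_sub_const] using
    tendsto_inv_smul_sum_range_of_summable htrans hbal hsmul hsummable
end

section
/- Let q be a quadratic form on a metrizable topological vector space (V, ρ). Then q admits a closed extension (a lower semicontinuous quadratic form extending q) if and only if q is lower semicontinuous on its domain, i.e., for every sequence (fₙ) in D(q) and f ∈ D(q) with fₙ → f in ρ one has q(f) ≤ liminf_{n→∞} q(fₙ). -/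
/-!
The closed extension is the lower semicontinuous hull `q̄ x = liminf_{y → x} q y`, which is
lower semicontinuous and below `q`. Since `y ↦ l • y` is a homeomorphism for `l ≠ 0`, `q̄` is
`2`-homogeneous; passing to the limit along `(x, y) → (f, g)` in `q (x + y) + q (x - y) =
2 q x + 2 q y` gives the parallelogram inequality for `q̄`, and homogeneity upgrades it to an
equality. Sequential lower semicontinuity of `q` on `D(q)` says exactly that `q̄ = q` there.
Conversely the restriction of a closed extension to `D(q)` is `q`. A translation invariant
balanced metric makes addition continuous and each `y ↦ l • y` Lipschitz.
-/

open Filter ENNReal Topology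

section TranslationInvariantMetric

variable {V : Type*} [AddCommGroup V] [PseudoMetricSpace V]

lemma dist_eq_dist_sub_zero (htrans : ∀ f g h : V, dist (f + h) (g + h) = dist f g) (a b : V) :
    dist a b = dist (a - b) 0 := by
  simpa using htrans (a - b) 0 b

lemma isTopologicalAddGroup_of_dist_add_right
    (htrans : ∀ f g h : V, dist (f + h) (g + h) = dist f g) : IsTopologicalAddGroup V where
  continuous_add := by
    refine (LipschitzWith.of_dist_le_mul (K := 2) fun p p' => ?_).continuous
    calc dist (p.1 + p.2) (p'.1 + p'.2)
        ≤ dist (p.1 + p.2) (p'.1 + p.2) + dist (p'.1 + p.2) (p'.1 + p'.2) := dist_triangle _ _ _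
      _ = dist p.1 p'.1 + dist p.2 p'.2 := by
          rw [htrans, add_comm p'.1, add_comm p'.1, htrans]
      _ ≤ 2 * dist p p' := by
          rw [Prod.dist_eq]; linarith [le_max_left (dist p.1 p'.1) (dist p.2 p'.2),
            le_max_right (dist p.1 p'.1) (dist p.2 p'.2)]
  continuous_neg := by
    refine (Isometry.of_dist_eq fun x y => ?_).continuous
    have := htrans (-x) (-y) (x + y)
    rw [neg_add_cancel_left, add_comm x y, neg_add_cancel_left] at this
    rw [← this, dist_comm]

lemma continuousConstSMul_of_dist_smul_le [Module ℝ V]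
    (htrans : ∀ f g h : V, dist (f + h) (g + h) = dist f g)
    (hbal : ∀ (l : ℝ) (f : V), |l| ≤ 1 → dist (l • f) 0 ≤ dist f 0) :
    ContinuousConstSMul ℝ V := by
  have := isTopologicalAddGroup_of_dist_add_right htrans
  refine ⟨fun l => ?_⟩
  obtain ⟨n, hn⟩ := exists_nat_gt |l|
  have hn0 : (0 : ℝ) < n := (abs_nonneg l).trans_lt hn
  have hsmall : Continuous fun x : V => (l / n) • x := by
    refine (LipschitzWith.of_dist_le_mul (K := 1) fun x y => ?_).continuous
    rw [dist_eq_dist_sub_zero htrans, ← smul_sub, dist_eq_dist_sub_zero htrans x, NNReal.coe_one,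
      one_mul]
    refine hbal _ _ ?_
    rw [abs_div, Nat.abs_cast, div_le_one hn0]
    exact hn.le
  convert (continuous_nsmul n).comp hsmall using 1
  ext x
  rw [Function.comp_apply, ← Nat.cast_smul_eq_nsmul ℝ, smul_smul, mul_div_cancel₀ _ hn0.ne']

end TranslationInvariantMetric

lemma ENNReal.liminf_prod_add_le {α β : Type*} (u : α → ℝ≥0∞) (v : β → ℝ≥0∞) (F : Filter α)
    (G : Filter β) :
    liminf (fun p : α × β => u p.1 + v p.2) (F ×ˢ G) ≤ liminf u F + liminf v G := by
  refine le_of_forall_gt fun c hc => ?_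
  obtain ⟨a, ha, b, hb, hab⟩ := ENNReal.exists_add_lt_of_add_lt hc
  refine (liminf_le_of_frequently_le' ?_).trans_lt hab
  have hfreq := frequently_prod_and.2 ⟨frequently_lt_of_liminf_lt (by isBoundedDefault) ha,
    frequently_lt_of_liminf_lt (by isBoundedDefault) hb⟩
  exact hfreq.mono fun p hp => add_le_add hp.1.le hp.2.le

lemma ENNReal.liminf_add_liminf_le {α : Type*} (u v : α → ℝ≥0∞) (F : Filter α) :
    liminf u F + liminf v F ≤ liminf (fun x => u x + v x) F := by
  rcases eq_or_ne (liminf u F) 0 with hu | hu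
  · rw [hu, zero_add]
    exact liminf_le_liminf (Eventually.of_forall fun x => le_add_self)
  rcases eq_or_ne (liminf v F) 0 with hv | hv
  · rw [hv, add_zero]
    exact liminf_le_liminf (Eventually.of_forall fun x => le_self_add)
  refine le_of_forall_lt fun c hc => ?_
  obtain ⟨a, ha, b, hb, hab⟩ := ENNReal.exists_lt_add_of_lt_add hc hu hv
  refine hab.trans_le (le_liminf_of_le (by isBoundedDefault) ?_)
  filter_upwards [eventually_lt_of_lt_liminf ha, eventually_lt_of_lt_liminf hb] with x hx hy
  exact add_le_add hx.le hy.le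

section LowerSemicontinuousHull

variable {X R : Type*} [TopologicalSpace X]

def lowerSemicontinuousHull [CompleteLattice R] (f : X → R) (x : X) : R :=
  liminf f (𝓝 x)

lemma lowerSemicontinuousHull_le [CompleteLattice R] (f : X → R) (x : X) :
    lowerSemicontinuousHull f x ≤ f x :=
  liminf_le_of_frequently_le' <|
    (frequently_pure (p := fun y => f y ≤ f x)).2 le_rfl |>.filter_mono (pure_le_nhds x)

lemma lowerSemicontinuous_lowerSemicontinuousHull [CompleteLinearOrder R] (f : X → R) :
    LowerSemicontinuous (lowerSemicontinuousHull f) := by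
  intro x y hy
  obtain ⟨a, ha, hya⟩ := lt_sSup_iff.1 hy
  filter_upwards [eventually_eventually_nhds.2 ha] with x' hx'
  exact hya.trans_le (le_liminf_of_le (by isBoundedDefault) hx')

lemma lowerSemicontinuousHull_eq_self [CompleteLinearOrder R] [DenselyOrdered R]
    [FirstCountableTopology X] {f : X → R} {x : X}
    (h : ∀ u : ℕ → X, (∀ n, f (u n) < f x) → Tendsto u atTop (𝓝 x) →
      f x ≤ liminf (fun n => f (u n)) atTop) :
    lowerSemicontinuousHull f x = f x := by
  refine (lowerSemicontinuousHull_le f x).antisymm (not_lt.1 fun hlt => ?_)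
  obtain ⟨c, hc, hcx⟩ := exists_between hlt
  obtain ⟨u, hux, huc⟩ :=
    frequently_iff_seq_forall.1 (frequently_lt_of_liminf_lt (by isBoundedDefault) hc)
  have hle : liminf (fun n => f (u n)) atTop ≤ c :=
    liminf_le_of_frequently_le' (Frequently.of_forall fun n => (huc n).le)
  exact (h u (fun n => (huc n).trans hcx) hux |>.trans hle).not_gt hcx

end LowerSemicontinuousHull

section QuadraticForm

variable {V : Type*} [AddCommGroup V]

lemma parallelogram_eq_of_le [Module ℝ V] {Q : V → ℝ≥0∞}
    (hhom : ∀ (l : ℝ) (f : V), Q (l • f) = ENNReal.ofReal (l ^ 2) * Q f)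
    (hle : ∀ f g : V, Q (f + g) + Q (f - g) ≤ 2 * Q f + 2 * Q g) (f g : V) :
    Q (f + g) + Q (f - g) = 2 * Q f + 2 * Q g := by
  refine (hle f g).antisymm ?_
  have h := hle (f + g) (f - g)
  rw [add_add_sub_cancel, add_sub_sub_cancel, ← two_smul ℝ, ← two_smul ℝ, hhom, hhom] at h
  have h4 : ENNReal.ofReal ((2 : ℝ) ^ 2) = 4 := by norm_num
  rw [h4] at h
  rw [← ENNReal.mul_le_mul_iff_right (a := 2) two_ne_zero ofNat_ne_top]
  calc 2 * (2 * Q f + 2 * Q g) = 4 * Q f + 4 * Q g := by ring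
    _ ≤ 2 * Q (f + g) + 2 * Q (f - g) := h
    _ = 2 * (Q (f + g) + Q (f - g)) := by ring

variable [TopologicalSpace V] {q : V → ℝ≥0∞}

lemma lowerSemicontinuousHull_smul [Module ℝ V] [ContinuousConstSMul ℝ V]
    (hhom : ∀ (l : ℝ) (f : V), q (l • f) = ENNReal.ofReal (l ^ 2) * q f) (l : ℝ) (f : V) :
    lowerSemicontinuousHull q (l • f) =
      ENNReal.ofReal (l ^ 2) * lowerSemicontinuousHull q f := by
  rcases eq_or_ne l 0 with rfl | hl
  · have hq0 : q 0 = 0 := by simpa using hhom 0 0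
    simpa [hq0] using lowerSemicontinuousHull_le q 0
  have hmap : map (l • ·) (𝓝 f) = 𝓝 (l • f) := (Homeomorph.smulOfNeZero l hl).map_nhds_eq f
  rw [lowerSemicontinuousHull, lowerSemicontinuousHull, ← hmap, ← liminf_comp]
  simp only [Function.comp_def, hhom]
  exact ENNReal.liminf_const_mul_of_ne_top ofReal_ne_top

lemma lowerSemicontinuousHull_add_add_sub_le [IsTopologicalAddGroup V]
    (hpar : ∀ f g : V, q (f + g) + q (f - g) = 2 * q f + 2 * q g) (f g : V) :
    lowerSemicontinuousHull q (f + g) + lowerSemicontinuousHull q (f - g) ≤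
      2 * lowerSemicontinuousHull q f + 2 * lowerSemicontinuousHull q g := by
  calc lowerSemicontinuousHull q (f + g) + lowerSemicontinuousHull q (f - g)
      ≤ liminf (fun p : V × V => q (p.1 + p.2)) (𝓝 (f, g)) +
          liminf (fun p : V × V => q (p.1 - p.2)) (𝓝 (f, g)) :=
        add_le_add tendsto_add.liminf_le_liminf_comp
          (continuous_sub.tendsto (f, g)).liminf_le_liminf_comp
    _ ≤ liminf (fun p : V × V => q (p.1 + p.2) + q (p.1 - p.2)) (𝓝 (f, g)) :=
        ENNReal.liminf_add_liminf_le _ _ _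
    _ = liminf (fun p : V × V => 2 * q p.1 + 2 * q p.2) (𝓝 f ×ˢ 𝓝 g) := by
        rw [nhds_prod_eq]
        simp only [hpar]
    _ ≤ liminf (fun x => 2 * q x) (𝓝 f) + liminf (fun y => 2 * q y) (𝓝 g) :=
        ENNReal.liminf_prod_add_le (fun x => 2 * q x) (fun y => 2 * q y) _ _
    _ = 2 * lowerSemicontinuousHull q f + 2 * lowerSemicontinuousHull q g := by
        simp only [ENNReal.liminf_const_mul_of_ne_top ofNat_ne_top, lowerSemicontinuousHull]

end QuadraticForm

theorem stmt3_general {V : Type*} [AddCommGroup V] [Module ℝ V] [MetricSpace V]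
    (htrans : ∀ f g h : V, dist (f + h) (g + h) = dist f g)
    (hbal : ∀ (l : ℝ) (f : V), |l| ≤ 1 → dist (l • f) 0 ≤ dist f 0)
    (q : V → ℝ≥0∞)
    (hhom : ∀ (l : ℝ) (f : V), q (l • f) = ENNReal.ofReal (l ^ 2) * q f)
    (hpar : ∀ f g : V, q (f + g) + q (f - g) = 2 * q f + 2 * q g) :
    -- `q` has a closed (lower semicontinuous) quadratic extension iff
    -- `q` is lower semicontinuous on its domain
    (∃ Q : V → ℝ≥0∞,
        (∀ (l : ℝ) (f : V), Q (l • f) = ENNReal.ofReal (l ^ 2) * Q f) ∧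
        (∀ f g : V, Q (f + g) + Q (f - g) = 2 * Q f + 2 * Q g) ∧
        (∀ (f : ℕ → V) (g : V), Tendsto f atTop (nhds g) →
          Q g ≤ liminf (fun n => Q (f n)) atTop) ∧
        (∀ f : V, q f < ⊤ → Q f = q f)) ↔
      (∀ (f : ℕ → V) (g : V), (∀ n, q (f n) < ⊤) → q g < ⊤ →
        Tendsto f atTop (nhds g) →
        q g ≤ liminf (fun n => q (f n)) atTop) := by
  have := isTopologicalAddGroup_of_dist_add_right htrans
  have := continuousConstSMul_of_dist_smul_le htrans hbal
  constructor
  · rintro ⟨Q, -, -, hQ, hQq⟩ f g hf hg hfg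
    have hQf : (fun n => Q (f n)) = fun n => q (f n) := funext fun n => hQq _ (hf n)
    simpa only [hQq g hg, hQf] using hQ f g hfg
  · intro H
    refine ⟨lowerSemicontinuousHull q, lowerSemicontinuousHull_smul hhom,
      parallelogram_eq_of_le (lowerSemicontinuousHull_smul hhom)
        (lowerSemicontinuousHull_add_add_sub_le hpar),
      fun f g hfg => ?_, fun g hg => lowerSemicontinuousHull_eq_self fun f hf hfg => ?_⟩
    · exact ((lowerSemicontinuous_lowerSemicontinuousHull q).le_liminf g).trans
        hfg.liminf_le_liminf_comp
    · exact H f g (fun n => (hf n).trans hg) hg hfg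

theorem stmt3 {V : Type*} [AddCommGroup V] [Module ℝ V] [MetricSpace V]
    (htrans : ∀ f g h : V, dist (f + h) (g + h) = dist f g)
    (hbal : ∀ (l : ℝ) (f : V), |l| ≤ 1 → dist (l • f) 0 ≤ dist f 0)
    (hsmul : ∀ f : V, Tendsto (fun c : ℝ => c • f) (nhds 0) (nhds (0 : V)))
    (q : V → ℝ≥0∞)
    (hhom : ∀ (l : ℝ) (f : V), q (l • f) = ENNReal.ofReal (l ^ 2) * q f)
    (hpar : ∀ f g : V, q (f + g) + q (f - g) = 2 * q f + 2 * q g) :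
    -- `q` has a closed (lower semicontinuous) quadratic extension iff
    -- `q` is lower semicontinuous on its domain
    (∃ Q : V → ℝ≥0∞,
        (∀ (l : ℝ) (f : V), Q (l • f) = ENNReal.ofReal (l ^ 2) * Q f) ∧
        (∀ f g : V, Q (f + g) + Q (f - g) = 2 * Q f + 2 * Q g) ∧
        (∀ (f : ℕ → V) (g : V), Tendsto f atTop (nhds g) →
          Q g ≤ liminf (fun n => Q (f n)) atTop) ∧
        (∀ f : V, q f < ⊤ → Q f = q f)) ↔
      (∀ (f : ℕ → V) (g : V), (∀ n, q (f n) < ⊤) → q g < ⊤ →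
        Tendsto f atTop (nhds g) →
        q g ≤ liminf (fun n => q (f n)) atTop) :=
  stmt3_general htrans hbal q hhom hpar
end

section
/- Let q be a closed quadratic form on a metrizable topological vector space (V, ρ), let (fₙ) be a sequence in D(q) with sup_n q(fₙ) < ∞, and let f ∈ V with fₙ → f in ρ. Then f ∈ D(q) and (fₙ) converges q-weakly to f, i.e., q(fₙ, g) → q(f, g) for all g ∈ D(q). If additionally limsup_{n→∞} q(fₙ) ≤ q(f), then q(f − fₙ) → 0. -/
open Filter ENNReal

/-- The bilinear form induced by a quadratic form via polarization. -/
noncomputable def polar {V : Type*} [AddCommGroup V] (q : V → ℝ≥0∞) (f g : V) : ℝ :=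
  ((q (f + g)).toReal - (q (f - g)).toReal) / 4

section Aux

variable {V : Type*} [AddCommGroup V] [Module ℝ V] {q : V → ℝ≥0∞}

lemma q_neg (hhom : ∀ (l : ℝ) (f : V), q (l • f) = ENNReal.ofReal (l ^ 2) * q f)
    (u : V) : q (-u) = q u := by
  have h := hhom (-1) u
  norm_num at h
  simpa using h

lemma q_zero (hhom : ∀ (l : ℝ) (f : V), q (l • f) = ENNReal.ofReal (l ^ 2) * q f) :
    q 0 = 0 := by
  have h := hhom 0 0
  norm_num at h
  simpa using h

lemma fin_add (hpar : ∀ f g : V, q (f + g) + q (f - g) = 2 * q f + 2 * q g)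
    {u v : V} (hu : q u ≠ ⊤) (hv : q v ≠ ⊤) : q (u + v) ≠ ⊤ ∧ q (u - v) ≠ ⊤ := by
  have h1 : q (u + v) + q (u - v) = 2 * q u + 2 * q v := hpar u v
  have h2 : 2 * q u + 2 * q v < ⊤ := by
    apply ENNReal.add_lt_top.mpr
    constructor <;> exact ENNReal.mul_lt_top (by simp) (by simpa [lt_top_iff_ne_top])
  have hle1 : q (u + v) ≤ 2 * q u + 2 * q v := h1 ▸ le_self_add
  have hle2 : q (u - v) ≤ 2 * q u + 2 * q v := h1 ▸ le_add_self
  exact ⟨(hle1.trans_lt h2).ne, (hle2.trans_lt h2).ne⟩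

lemma par_toReal (hpar : ∀ f g : V, q (f + g) + q (f - g) = 2 * q f + 2 * q g)
    {u v : V} (hu : q u ≠ ⊤) (hv : q v ≠ ⊤) :
    (q (u + v)).toReal + (q (u - v)).toReal = 2 * (q u).toReal + 2 * (q v).toReal := by
  obtain ⟨h1, h2⟩ := fin_add hpar hu hv
  have h := congrArg ENNReal.toReal (hpar u v)
  rw [ENNReal.toReal_add h1 h2,
    ENNReal.toReal_add (ENNReal.mul_ne_top (by simp) hu) (ENNReal.mul_ne_top (by simp) hv),
    ENNReal.toReal_mul, ENNReal.toReal_mul] at h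
  simpa using h

lemma expand_add (hpar : ∀ f g : V, q (f + g) + q (f - g) = 2 * q f + 2 * q g)
    {u v : V} (hu : q u ≠ ⊤) (hv : q v ≠ ⊤) :
    (q (u + v)).toReal = (q u).toReal + (q v).toReal + 2 * polar q u v := by
  have h := par_toReal hpar hu hv
  simp only [polar]
  linarith

lemma expand_sub (hpar : ∀ f g : V, q (f + g) + q (f - g) = 2 * q f + 2 * q g)
    {u v : V} (hu : q u ≠ ⊤) (hv : q v ≠ ⊤) :
    (q (u - v)).toReal = (q u).toReal + (q v).toReal - 2 * polar q u v := by
  have h := par_toReal hpar hu hv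
  simp only [polar]
  linarith

lemma polar_zero_right (hhom : ∀ (l : ℝ) (f : V), q (l • f) = ENNReal.ofReal (l ^ 2) * q f)
    (u : V) : polar q u 0 = 0 := by
  simp [polar]

lemma polar_neg_right (u v : V) : polar q u (-v) = - polar q u v := by
  simp only [polar, ← sub_eq_add_neg, sub_neg_eq_add]
  ring

lemma polar_symm (hhom : ∀ (l : ℝ) (f : V), q (l • f) = ENNReal.ofReal (l ^ 2) * q f)
    (u v : V) : polar q u v = polar q v u := by
  have h : q (u - v) = q (v - u) := by
    rw [← q_neg hhom (v - u)]
    congr 1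
    abel
  simp only [polar, add_comm u v, h]

lemma polar_parallel (hpar : ∀ f g : V, q (f + g) + q (f - g) = 2 * q f + 2 * q g)
    {u v w : V} (hu : q u ≠ ⊤) (hv : q v ≠ ⊤) (hw : q w ≠ ⊤) :
    polar q u (v + w) + polar q u (v - w) = 2 * polar q u v := by
  have h1 := par_toReal hpar (fin_add hpar hu hv).1 hw
  have h2 := par_toReal hpar (fin_add hpar hu hv).2 hw
  have e1 : u + v + w = u + (v + w) := by abel
  have e2 : u + v - w = u + (v - w) := by abel
  have e3 : u - v + w = u - (v - w) := by abel
  have e4 : u - v - w = u - (v + w) := by abel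
  rw [e1, e2] at h1
  rw [e3, e4] at h2
  simp only [polar]
  linarith

lemma polar_add_right (hhom : ∀ (l : ℝ) (f : V), q (l • f) = ENNReal.ofReal (l ^ 2) * q f)
    (hpar : ∀ f g : V, q (f + g) + q (f - g) = 2 * q f + 2 * q g)
    {u x y : V} (hu : q u ≠ ⊤) (hx : q x ≠ ⊤) (hy : q y ≠ ⊤) :
    polar q u (x + y) = polar q u x + polar q u y := by
  have hxy : q (x + y) ≠ ⊤ := (fin_add hpar hx hy).1
  have hxy' : q (x - y) ≠ ⊤ := (fin_add hpar hx hy).2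
  set v := (2⁻¹ : ℝ) • (x + y) with hvdef
  set w := (2⁻¹ : ℝ) • (x - y) with hwdef
  have hv : q v ≠ ⊤ := by rw [hvdef, hhom]; exact ENNReal.mul_ne_top ENNReal.ofReal_ne_top hxy
  have hw : q w ≠ ⊤ := by rw [hwdef, hhom]; exact ENNReal.mul_ne_top ENNReal.ofReal_ne_top hxy'
  have hvw1 : v + w = x := by
    rw [hvdef, hwdef, ← smul_add]
    have : (x + y) + (x - y) = (2 : ℝ) • x := by rw [two_smul]; abel
    rw [this, smul_smul]
    norm_num
  have hvw2 : v - w = y := by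
    rw [hvdef, hwdef, ← smul_sub]
    have : (x + y) - (x - y) = (2 : ℝ) • y := by rw [two_smul]; abel
    rw [this, smul_smul]
    norm_num
  have hvv : v + v = x + y := by
    rw [hvdef, ← add_smul]
    norm_num
  have h1 := polar_parallel hpar hu hv hw
  rw [hvw1, hvw2] at h1
  have h2 := polar_parallel hpar hu hv hv
  rw [hvv, sub_self, polar_zero_right hhom, add_zero] at h2
  linarith

lemma polar_nsmul (hhom : ∀ (l : ℝ) (f : V), q (l • f) = ENNReal.ofReal (l ^ 2) * q f)
    (hpar : ∀ f g : V, q (f + g) + q (f - g) = 2 * q f + 2 * q g)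
    {u h : V} (hu : q u ≠ ⊤) (hh : q h ≠ ⊤) (n : ℕ) :
    polar q u ((n : ℝ) • h) = n * polar q u h := by
  induction n with
  | zero => simp [polar_zero_right hhom]
  | succ n ih =>
    have hn : q ((n : ℝ) • h) ≠ ⊤ := by
      rw [hhom]; exact ENNReal.mul_ne_top ENNReal.ofReal_ne_top hh
    have hcast : ((n + 1 : ℕ) : ℝ) • h = (n : ℝ) • h + h := by
      push_cast
      rw [add_smul, one_smul]
    rw [hcast, polar_add_right hhom hpar hu hn hh, ih]
    push_cast
    ring

end Aux

theorem stmt5 {V : Type*} [AddCommGroup V] [Module ℝ V] [MetricSpace V]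
    (htrans : ∀ f g h : V, dist (f + h) (g + h) = dist f g)
    (hbal : ∀ (l : ℝ) (f : V), |l| ≤ 1 → dist (l • f) 0 ≤ dist f 0)
    (hsmul : ∀ f : V, Tendsto (fun c : ℝ => c • f) (nhds 0) (nhds (0 : V)))
    (q : V → ℝ≥0∞)
    (hhom : ∀ (l : ℝ) (f : V), q (l • f) = ENNReal.ofReal (l ^ 2) * q f)
    (hpar : ∀ f g : V, q (f + g) + q (f - g) = 2 * q f + 2 * q g)
    (hclosed : ∀ (f : ℕ → V) (g : V), Tendsto f atTop (nhds g) →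
      q g ≤ liminf (fun n => q (f n)) atTop)
    (f : ℕ → V) (g : V)
    (hbdd : ∃ C : ℝ≥0∞, C < ⊤ ∧ ∀ n, q (f n) ≤ C)
    (hconv : Tendsto f atTop (nhds g)) :
    q g < ⊤ ∧
      (∀ h : V, q h < ⊤ →
        Tendsto (fun n => polar q (f n) h) atTop (nhds (polar q g h))) ∧
      (limsup (fun n => q (f n)) atTop ≤ q g →
        Tendsto (fun n => q (g - f n)) atTop (nhds 0)) := by
  obtain ⟨C, hC, hCb⟩ := hbdd
  have hDf : ∀ n, q (f n) ≠ ⊤ := fun n => ((hCb n).trans_lt hC).ne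
  have hliminfC : liminf (fun n => q (f n)) atTop ≤ C := by
    have h := Filter.liminf_le_liminf (Filter.Eventually.of_forall hCb)
      (f := atTop) (u := fun n => q (f n)) (v := fun _ : ℕ => C)
    rwa [liminf_const] at h
  have hgC : q g ≤ C := (hclosed f g hconv).trans hliminfC
  have hqg : q g < ⊤ := hgC.trans_lt hC
  have hDg : q g ≠ ⊤ := hqg.ne
  -- The key weak-convergence statement
  have key : ∀ h : V, q h ≠ ⊤ →
      Tendsto (fun n => polar q (f n) h) atTop (nhds (polar q g h)) := by
    intro h hh
    set M : ℝ := (C.toReal + (q h).toReal) / 2 with hMdef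
    have hbound : ∀ n, |polar q (f n) h| ≤ M := by
      intro n
      have e1 := expand_add hpar (hDf n) hh
      have e2 := expand_sub hpar (hDf n) hh
      have h1 : (0 : ℝ) ≤ (q (f n + h)).toReal := ENNReal.toReal_nonneg
      have h2 : (0 : ℝ) ≤ (q (f n - h)).toReal := ENNReal.toReal_nonneg
      have h3 : (q (f n)).toReal ≤ C.toReal := ENNReal.toReal_mono hC.ne (hCb n)
      rw [abs_le]
      constructor <;> [skip; skip] <;> rw [hMdef] <;> linarith
    apply tendsto_of_subseq_tendsto
    intro ns hns
    -- Bolzano–Weierstrass for the polar values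
    obtain ⟨α, -, φ₁, hφ₁, hα⟩ :=
      tendsto_subseq_of_bounded (Metric.isBounded_Icc (-M) M)
        (x := fun k => polar q (f (ns k)) h)
        (fun k => by simpa [Set.mem_Icc, ← abs_le] using hbound (ns k))
    -- Bolzano–Weierstrass for the energies
    obtain ⟨β, -, φ₂, hφ₂, hβ⟩ :=
      tendsto_subseq_of_bounded (Metric.isBounded_Icc 0 C.toReal)
        (x := fun k => (q (f (ns (φ₁ k)))).toReal)
        (fun k => ⟨ENNReal.toReal_nonneg, ENNReal.toReal_mono hC.ne (hCb _)⟩)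
    refine ⟨φ₁ ∘ φ₂, ?_⟩
    have hαs : Tendsto (fun k => polar q (f (ns (φ₁ (φ₂ k)))) h) atTop (nhds α) :=
      hα.comp hφ₂.tendsto_atTop
    have hβs : Tendsto (fun k => (q (f (ns (φ₁ (φ₂ k))))).toReal) atTop (nhds β) := hβ
    have hFtendsto : Tendsto (fun k => f (ns (φ₁ (φ₂ k)))) atTop (nhds g) :=
      hconv.comp (hns.comp ((hφ₁.comp hφ₂).tendsto_atTop))
    -- main inequality for a translate
    have step : ∀ w : V, q w ≠ ⊤ → ∀ aw : ℝ,
        Tendsto (fun k => polar q (f (ns (φ₁ (φ₂ k)))) w) atTop (nhds aw) →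
        (q g).toReal + 2 * polar q g w ≤ β + 2 * aw := by
      intro w hw aw haw
      have hconv' : Tendsto (fun k => f (ns (φ₁ (φ₂ k))) + w) atTop (nhds (g + w)) := by
        rw [Metric.tendsto_atTop] at hFtendsto ⊢
        intro ε hε
        obtain ⟨N, hN⟩ := hFtendsto ε hε
        exact ⟨N, fun n hn => by rw [htrans]; exact hN n hn⟩
      have hlsc := hclosed _ _ hconv'
      have hexp : ∀ k, (q (f (ns (φ₁ (φ₂ k))) + w)).toReal
          = (q (f (ns (φ₁ (φ₂ k))))).toReal + (q w).toReal
            + 2 * polar q (f (ns (φ₁ (φ₂ k)))) w :=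
        fun k => expand_add hpar (hDf _) hw
      have hL : Tendsto (fun k => (q (f (ns (φ₁ (φ₂ k))) + w)).toReal) atTop
          (nhds (β + (q w).toReal + 2 * aw)) := by
        simp only [hexp]
        exact (hβs.add tendsto_const_nhds).add (haw.const_mul 2)
      have hL0 : 0 ≤ β + (q w).toReal + 2 * aw :=
        ge_of_tendsto hL (Filter.Eventually.of_forall fun k => ENNReal.toReal_nonneg)
      have hofReal : Tendsto (fun k => q (f (ns (φ₁ (φ₂ k))) + w)) atTop
          (nhds (ENNReal.ofReal (β + (q w).toReal + 2 * aw))) := by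
        have h2 := ENNReal.tendsto_ofReal hL
        have heq : (fun k => q (f (ns (φ₁ (φ₂ k))) + w))
            = fun k => ENNReal.ofReal ((q (f (ns (φ₁ (φ₂ k))) + w)).toReal) := by
          funext k
          rw [ENNReal.ofReal_toReal (fin_add hpar (hDf _) hw).1]
        rw [heq]
        exact h2
      rw [hofReal.liminf_eq] at hlsc
      have hle : (q (g + w)).toReal ≤ β + (q w).toReal + 2 * aw :=
        ENNReal.toReal_le_of_le_ofReal hL0 hlsc
      have hexpg := expand_add hpar hDg hw
      linarith
    -- use it with w = ±(n • h)
    have hineq : ∀ n : ℕ,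
        (q g).toReal + 2 * ((n : ℝ) * polar q g h) ≤ β + 2 * ((n : ℝ) * α) ∧
        (q g).toReal - 2 * ((n : ℝ) * polar q g h) ≤ β - 2 * ((n : ℝ) * α) := by
      intro n
      have hwfin : q ((n : ℝ) • h) ≠ ⊤ := by
        rw [hhom]; exact ENNReal.mul_ne_top ENNReal.ofReal_ne_top hh
      constructor
      · have htd : Tendsto (fun k => polar q (f (ns (φ₁ (φ₂ k)))) ((n : ℝ) • h)) atTop
            (nhds ((n : ℝ) * α)) := by
          have heq : (fun k => polar q (f (ns (φ₁ (φ₂ k)))) ((n : ℝ) • h))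
              = fun k => (n : ℝ) * polar q (f (ns (φ₁ (φ₂ k)))) h := by
            funext k
            exact polar_nsmul hhom hpar (hDf _) hh n
          rw [heq]
          exact hαs.const_mul (n : ℝ)
        have hs := step ((n : ℝ) • h) hwfin ((n : ℝ) * α) htd
        rwa [polar_nsmul hhom hpar hDg hh n] at hs
      · have hwfin' : q (-((n : ℝ) • h)) ≠ ⊤ := by rwa [q_neg hhom]
        have htd : Tendsto (fun k => polar q (f (ns (φ₁ (φ₂ k)))) (-((n : ℝ) • h))) atTop
            (nhds (-((n : ℝ) * α))) := by
          have heq : (fun k => polar q (f (ns (φ₁ (φ₂ k)))) (-((n : ℝ) • h)))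
              = fun k => -((n : ℝ) * polar q (f (ns (φ₁ (φ₂ k)))) h) := by
            funext k
            rw [polar_neg_right, polar_nsmul hhom hpar (hDf _) hh n]
          rw [heq]
          exact (hαs.const_mul (n : ℝ)).neg
        have hs := step (-((n : ℝ) • h)) hwfin' (-((n : ℝ) * α)) htd
        rw [polar_neg_right, polar_nsmul hhom hpar hDg hh n] at hs
        linarith
    have hPα : polar q g h = α := by
      by_contra hne
      have habs : 0 < |polar q g h - α| := abs_pos.mpr (sub_ne_zero.mpr hne)
      have hkey : ∀ n : ℕ, 2 * (n : ℝ) * |polar q g h - α| ≤ β - (q g).toReal := by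
        intro n
        rcases abs_cases (polar q g h - α) with ⟨he, -⟩ | ⟨he, -⟩ <;> rw [he]
        · nlinarith [(hineq n).1]
        · nlinarith [(hineq n).2]
      obtain ⟨n, hn⟩ := exists_nat_gt ((β - (q g).toReal) / (2 * |polar q g h - α|))
      rw [div_lt_iff₀ (mul_pos two_pos habs)] at hn
      have h2 := hkey n
      nlinarith
    have : Tendsto (fun k => polar q (f (ns ((φ₁ ∘ φ₂) k))) h) atTop (nhds α) := hαs
    rwa [hPα]
  refine ⟨hqg, fun h hh => key h hh.ne, ?_⟩
  -- strong convergence part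
  intro hlimsup
  have h1 : q g ≤ liminf (fun n => q (f n)) atTop := hclosed f g hconv
  have hll : liminf (fun n => q (f n)) atTop ≤ limsup (fun n => q (f n)) atTop :=
    liminf_le_limsup
  have hQtendsto : Tendsto (fun n => q (f n)) atTop (nhds (q g)) :=
    tendsto_of_liminf_eq_limsup (le_antisymm (hll.trans hlimsup) h1)
      (le_antisymm hlimsup (h1.trans hll))
  have hQreal : Tendsto (fun n => (q (f n)).toReal) atTop (nhds (q g).toReal) :=
    (ENNReal.tendsto_toReal hDg).comp hQtendsto
  have hgg : polar q g g = (q g).toReal := by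
    have h2 : q (g + g) = ENNReal.ofReal ((2 : ℝ) ^ 2) * q g := by
      rw [← hhom]
      congr 1
      rw [two_smul]
    simp only [polar, sub_self, q_zero hhom, h2, ENNReal.toReal_mul,
      ENNReal.toReal_ofReal (by norm_num : (0 : ℝ) ≤ (2 : ℝ) ^ 2), ENNReal.toReal_zero]
    ring
  have hpol : Tendsto (fun n => polar q (f n) g) atTop (nhds (q g).toReal) := by
    have := key g hDg
    rwa [hgg] at this
  have hx : Tendsto (fun n => (q (g - f n)).toReal) atTop (nhds 0) := by
    have hexp : ∀ n, (q (g - f n)).toReal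
        = (q g).toReal + (q (f n)).toReal - 2 * polar q (f n) g := by
      intro n
      rw [expand_sub hpar hDg (hDf n), polar_symm hhom g (f n)]
    simp only [hexp]
    have ht := ((tendsto_const_nhds (x := (q g).toReal)).add hQreal).sub (hpol.const_mul 2)
    have h0 : (q g).toReal + (q g).toReal - 2 * (q g).toReal = 0 := by ring
    rwa [h0] at ht
  have hfin : ∀ n, q (g - f n) ≠ ⊤ := fun n => (fin_add hpar hDg (hDf n)).2
  have heq : (fun n => q (g - f n)) = fun n => ENNReal.ofReal ((q (g - f n)).toReal) := by
    funext n
    rw [ENNReal.ofReal_toReal (hfin n)]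
  rw [heq]
  simpa using ENNReal.tendsto_ofReal hx
end

section
/- Let (X, 𝓑, m) be a σ-finite measure space and q a quadratic form on L⁰(m) whose domain D(q) is a lattice (closed under pointwise min and max). Then q is monotone (|f| ≤ |g| a.e. with f, g ∈ D(q) implies q(f) ≤ q(g)) if and only if q is nonnegative definite (f, g ∈ D(q) with fg ≥ 0 a.e. implies q(f,g) ≥ 0). -/
/-
Both directions come from the identity `4 q(f, g) = q(f + g) - q(f - g)` together with two
pointwise facts about reals: `fg ≥ 0` iff `|f - g| ≤ |f + g|`, and `|f| ≤ |g|` iff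
`(g - f)(g + f) ≥ 0`. Monotonicity applied to `f - g, f + g` thus gives `q(f, g) ≥ 0`, and
nonnegative definiteness applied to `g - f, g + f` gives `q(g) - q(f) = q(g - f, g + f) ≥ 0`.
-/

open MeasureTheory ENNReal

section OrderedRing

variable {R : Type*} [CommRing R] [LinearOrder R] [IsStrictOrderedRing R] {a b : R}

theorem abs_sub_le_abs_add_iff : |a - b| ≤ |a + b| ↔ 0 ≤ a * b := by
  rw [← sq_le_sq]
  constructor <;> intro h <;> nlinarith

theorem abs_le_abs_iff_nonneg_sub_mul_add : |a| ≤ |b| ↔ 0 ≤ (b - a) * (b + a) := by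
  rw [← sq_le_sq, ← sub_nonneg]
  ring_nf

end OrderedRing

namespace MeasureTheory.AEEqFun

variable {α : Type*} [MeasurableSpace α] {μ : Measure α} {f g : α →ₘ[μ] ℝ}

theorem abs_sub_le_abs_add (h : 0 ≤ f * g) : |f - g| ≤ |f + g| := by
  rw [← coeFn_le] at h ⊢
  filter_upwards [h, coeFn_abs (f - g), coeFn_abs (f + g), coeFn_sub f g, coeFn_add f g,
    coeFn_mul f g, coeFn_zero (β := ℝ) (μ := μ)] with
    a ha habs_sub habs_add hsub hadd hmul hzero
  rw [hmul, hzero] at ha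
  rw [habs_sub, habs_add, hsub, hadd]
  exact abs_sub_le_abs_add_iff.2 ha

theorem nonneg_sub_mul_add (h : |f| ≤ |g|) : 0 ≤ (g - f) * (g + f) := by
  rw [← coeFn_le] at h ⊢
  filter_upwards [h, coeFn_abs f, coeFn_abs g, coeFn_sub g f, coeFn_add g f,
    coeFn_mul (g - f) (g + f), coeFn_zero (β := ℝ) (μ := μ)] with
    a ha habs_f habs_g hsub hadd hmul hzero
  rw [habs_f, habs_g] at ha
  rw [hmul, hzero, Pi.mul_apply, hsub, hadd]
  exact abs_le_abs_iff_nonneg_sub_mul_add.1 ha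

end MeasureTheory.AEEqFun

section Polar

variable {V : Type*} [AddCommGroup V] {q : V → ℝ≥0∞} {f g : V}

theorem lt_top_add_and_sub_of_parallelogram
    (hpar : ∀ f g : V, q (f + g) + q (f - g) = 2 * q f + 2 * q g)
    (hf : q f < ⊤) (hg : q g < ⊤) : q (f + g) < ⊤ ∧ q (f - g) < ⊤ := by
  have hsum : q (f + g) + q (f - g) < ⊤ := by
    rw [hpar]
    exact add_lt_top.2 ⟨mul_lt_top ofNat_lt_top hf, mul_lt_top ofNat_lt_top hg⟩
  exact add_lt_top.1 hsum

theorem polar_nonneg_iff (hadd : q (f + g) ≠ ⊤) (hsub : q (f - g) ≠ ⊤) :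
    0 ≤ polar q f g ↔ q (f - g) ≤ q (f + g) := by
  rw [polar, ← toReal_le_toReal hsub hadd, ← sub_nonneg]
  constructor <;> intro h <;> linarith

theorem polar_sub_add_of_homogeneous [Module ℝ V]
    (hhom : ∀ (l : ℝ) (f : V), q (l • f) = ENNReal.ofReal (l ^ 2) * q f) (f g : V) :
    polar q (g - f) (g + f) = (q g).toReal - (q f).toReal := by
  have hadd : g - f + (g + f) = (2 : ℝ) • g := by rw [two_smul]; abel
  have hsub : g - f - (g + f) = (-2 : ℝ) • f := by rw [neg_smul, two_smul]; abel
  rw [polar, hadd, hsub, hhom, hhom]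
  norm_num
  ring

end Polar

theorem stmt6_general {α : Type*} [MeasurableSpace α] {μ : Measure α}
    (q : (α →ₘ[μ] ℝ) → ℝ≥0∞)
    (hhom : ∀ (l : ℝ) (f : α →ₘ[μ] ℝ), q (l • f) = ENNReal.ofReal (l ^ 2) * q f)
    (hpar : ∀ f g : α →ₘ[μ] ℝ, q (f + g) + q (f - g) = 2 * q f + 2 * q g) :
    -- `q` is monotone iff `q` is nonnegative definite
    (∀ f g : α →ₘ[μ] ℝ, q f < ⊤ → q g < ⊤ → |f| ≤ |g| → q f ≤ q g) ↔
      (∀ f g : α →ₘ[μ] ℝ, q f < ⊤ → q g < ⊤ → 0 ≤ f * g → 0 ≤ polar q f g) := by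
  constructor
  · intro hmono f g hf hg hfg
    obtain ⟨hadd, hsub⟩ := lt_top_add_and_sub_of_parallelogram hpar hf hg
    exact (polar_nonneg_iff hadd.ne hsub.ne).2
      (hmono _ _ hsub hadd (AEEqFun.abs_sub_le_abs_add hfg))
  · intro hpos f g hf hg hfg
    obtain ⟨hadd, hsub⟩ := lt_top_add_and_sub_of_parallelogram hpar hg hf
    have hdiff := hpos _ _ hsub hadd (AEEqFun.nonneg_sub_mul_add hfg)
    rw [polar_sub_add_of_homogeneous hhom] at hdiff
    exact (toReal_le_toReal hf.ne hg.ne).1 (sub_nonneg.1 hdiff)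

theorem stmt6 {α : Type*} [MeasurableSpace α] {μ : Measure α} [SigmaFinite μ]
    (q : (α →ₘ[μ] ℝ) → ℝ≥0∞)
    (hhom : ∀ (l : ℝ) (f : α →ₘ[μ] ℝ), q (l • f) = ENNReal.ofReal (l ^ 2) * q f)
    (hpar : ∀ f g : α →ₘ[μ] ℝ, q (f + g) + q (f - g) = 2 * q f + 2 * q g)
    -- the domain of `q` is a lattice
    (hlat : ∀ f g : α →ₘ[μ] ℝ, q f < ⊤ → q g < ⊤ → q (f ⊓ g) < ⊤ ∧ q (f ⊔ g) < ⊤) :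
    -- `q` is monotone iff `q` is nonnegative definite
    (∀ f g : α →ₘ[μ] ℝ, q f < ⊤ → q g < ⊤ → |f| ≤ |g| → q f ≤ q g) ↔
      (∀ f g : α →ₘ[μ] ℝ, q f < ⊤ → q g < ⊤ → 0 ≤ f * g → 0 ≤ polar q f g) :=
  stmt6_general q hhom hpar
end

section
/- Let q be a monotone quadratic form on L⁰(m) whose domain is a lattice. Then for every f ∈ D(q) one has |f| ∈ D(q) and q(f) = q(|f|), and moreover q(f₊, f₋) = 0 where f₊ = f ∨ 0 and f₋ = (−f) ∨ 0. -/
/-! Since `|f| = f⁺ + f⁻` and `f = f⁺ - f⁻`, the parallelogram law for the pair `f⁺, f⁻` bounds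
`q |f|` by `2 q f⁺ + 2 q f⁻`, which is finite because the domain is a lattice. Monotonicity then
gives `q f = q |f|`, and polarization reads `q(f⁺, f⁻) = (q |f| - q f) / 4 = 0`. -/

open MeasureTheory ENNReal

instance MeasureTheory.AEEqFun.instAddLeftMono {α : Type*} [MeasurableSpace α] {μ : Measure α} :
    AddLeftMono (α →ₘ[μ] ℝ) where
  elim c f g (hfg : f ≤ g) := show c + f ≤ c + g by
    rw [← AEEqFun.coeFn_le] at hfg ⊢
    filter_upwards [hfg, AEEqFun.coeFn_add c f, AEEqFun.coeFn_add c g] with x hx hcf hcg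
    rw [hcf, hcg]
    exact add_le_add_right hx _

section Homogeneous

variable {V : Type*} [AddCommGroup V] [Module ℝ V] (q : V → ℝ≥0∞)
  (hhom : ∀ (l : ℝ) (f : V), q (l • f) = ENNReal.ofReal (l ^ 2) * q f)
include hhom

theorem map_zero_of_homogeneous : q 0 = 0 := by
  simpa using hhom 0 0

theorem map_neg_of_homogeneous (f : V) : q (-f) = q f := by
  simpa using hhom (-1) f

end Homogeneous

section Parallelogram

variable {V : Type*} [AddCommGroup V] (q : V → ℝ≥0∞)

theorem add_lt_top_of_parallelogram
    (hpar : ∀ f g : V, q (f + g) + q (f - g) = 2 * q f + 2 * q g)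
    {f g : V} (hf : q f < ⊤) (hg : q g < ⊤) : q (f + g) < ⊤ :=
  calc q (f + g) ≤ q (f + g) + q (f - g) := le_self_add
    _ = 2 * q f + 2 * q g := hpar f g
    _ < ⊤ := by finiteness

variable [Lattice V] [AddLeftMono V]

theorem polar_posPart_negPart (f : V) :
    polar q f⁺ f⁻ = ((q |f|).toReal - (q f).toReal) / 4 := by
  have : AddRightMono V := addRightMono_of_addLeftMono V
  rw [polar, posPart_add_negPart, posPart_sub_negPart]

end Parallelogram

theorem stmt7_general {α : Type*} [MeasurableSpace α] {μ : Measure α}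
    (q : (α →ₘ[μ] ℝ) → ℝ≥0∞)
    (hhom : ∀ (l : ℝ) (f : α →ₘ[μ] ℝ), q (l • f) = ENNReal.ofReal (l ^ 2) * q f)
    (hpar : ∀ f g : α →ₘ[μ] ℝ, q (f + g) + q (f - g) = 2 * q f + 2 * q g)
    -- the domain of `q` is a lattice
    (hlat : ∀ f g : α →ₘ[μ] ℝ, q f < ⊤ → q g < ⊤ → q (f ⊓ g) < ⊤ ∧ q (f ⊔ g) < ⊤)
    -- `q` is monotone
    (hmono : ∀ f g : α →ₘ[μ] ℝ, q f < ⊤ → q g < ⊤ → |f| ≤ |g| → q f ≤ q g)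
    (f : α →ₘ[μ] ℝ) (hf : q f < ⊤) :
    q |f| < ⊤ ∧ q f = q |f| ∧ polar q (f ⊔ 0) ((-f) ⊔ 0) = 0 := by
  have hzero : q 0 < ⊤ := by simp [map_zero_of_homogeneous q hhom]
  have hpos : q f⁺ < ⊤ := (hlat f 0 hf hzero).2
  have hneg : q f⁻ < ⊤ := (hlat (-f) 0 (by rwa [map_neg_of_homogeneous q hhom]) hzero).2
  have habs : q |f| < ⊤ := by
    rw [← posPart_add_negPart]
    exact add_lt_top_of_parallelogram q hpar hpos hneg
  have heq : q f = q |f| :=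
    le_antisymm (hmono f |f| hf habs (abs_abs f).ge) (hmono |f| f habs hf (abs_abs f).le)
  refine ⟨habs, heq, ?_⟩
  rw [← posPart_def, ← negPart_def, polar_posPart_negPart, heq, sub_self, zero_div]

theorem stmt7 {α : Type*} [MeasurableSpace α] {μ : Measure α} [SigmaFinite μ]
    (q : (α →ₘ[μ] ℝ) → ℝ≥0∞)
    (hhom : ∀ (l : ℝ) (f : α →ₘ[μ] ℝ), q (l • f) = ENNReal.ofReal (l ^ 2) * q f)
    (hpar : ∀ f g : α →ₘ[μ] ℝ, q (f + g) + q (f - g) = 2 * q f + 2 * q g)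
    -- the domain of `q` is a lattice
    (hlat : ∀ f g : α →ₘ[μ] ℝ, q f < ⊤ → q g < ⊤ → q (f ⊓ g) < ⊤ ∧ q (f ⊔ g) < ⊤)
    -- `q` is monotone
    (hmono : ∀ f g : α →ₘ[μ] ℝ, q f < ⊤ → q g < ⊤ → |f| ≤ |g| → q f ≤ q g)
    (f : α →ₘ[μ] ℝ) (hf : q f < ⊤) :
    q |f| < ⊤ ∧ q f = q |f| ∧ polar q (f ⊔ 0) ((-f) ⊔ 0) = 0 :=
  stmt7_general q hhom hpar hlat hmono f hf
end

section
/- Let L, M, K ≥ 0 and let C : ℝ → ℝ be L-Lipschitz with C(0) = 0 and |C(x)| ≤ M for |x| ≤ K. Define A := {(x,y) ∈ ℝ² : |x| ≤ |y|·K} and Ĉ : A → ℝ by Ĉ(x,y) := C(x/y)·y for y ≠ 0 and Ĉ(x,0) := 0. Then for all (x₁,y₁), (x₂,y₂) ∈ A with y₁, y₂ ≥ 0: |Ĉ(x₁,y₁) − Ĉ(x₂,y₂)| ≤ L|x₁ − x₂| + (M + L·K)|y₁ − y₂|. -/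
theorem stmt9 (L M K : ℝ) (hL : 0 ≤ L) (hM : 0 ≤ M) (hK : 0 ≤ K)
    (C : ℝ → ℝ) (hLip : LipschitzWith (Real.toNNReal L) C) (hC0 : C 0 = 0)
    (hbound : ∀ x : ℝ, |x| ≤ K → |C x| ≤ M)
    (Chat : ℝ → ℝ → ℝ)
    (hChat : ∀ x y : ℝ, y ≠ 0 → Chat x y = C (x / y) * y)
    (hChat0 : ∀ x : ℝ, Chat x 0 = 0) :
    ∀ x₁ y₁ x₂ y₂ : ℝ, |x₁| ≤ |y₁| * K → |x₂| ≤ |y₂| * K →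
      0 ≤ y₁ → 0 ≤ y₂ →
      |Chat x₁ y₁ - Chat x₂ y₂| ≤ L * |x₁ - x₂| + (M + L * K) * |y₁ - y₂| := by
  have hLip' : ∀ a b : ℝ, |C a - C b| ≤ L * |a - b| := by
    intro a b
    have := hLip.dist_le_mul a b
    simpa [Real.dist_eq, Real.coe_toNNReal L hL] using this
  -- helper : bound on |Chat x y| for y > 0
  have hbd : ∀ x y : ℝ, |x| ≤ |y| * K → 0 < y → |Chat x y| ≤ M * y := by
    intro x y hxy hy
    rw [hChat x y hy.ne']
    have hK' : |x / y| ≤ K := by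
      rw [abs_div, abs_of_pos hy, div_le_iff₀ hy, mul_comm]
      rwa [abs_of_pos hy] at hxy
    calc |C (x / y) * y| = |C (x / y)| * y := by
            rw [abs_mul, abs_of_pos hy]
      _ ≤ M * y := by
            exact mul_le_mul_of_nonneg_right (hbound _ hK') hy.le
  intro x₁ y₁ x₂ y₂ h₁ h₂ hy₁ hy₂
  rcases eq_or_lt_of_le hy₁ with h1 | h1 <;> rcases eq_or_lt_of_le hy₂ with h2 | h2
  · have hx1 : x₁ = 0 := by
      have : |x₁| ≤ 0 := by simpa [← h1] using h₁
      simpa using le_antisymm this (abs_nonneg _)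
    have hx2 : x₂ = 0 := by
      have : |x₂| ≤ 0 := by simpa [← h2] using h₂
      simpa using le_antisymm this (abs_nonneg _)
    simp only [← h1, ← h2, hChat0, hx1, hx2, sub_self, abs_zero]
    positivity
  · have hx1 : x₁ = 0 := by
      have : |x₁| ≤ 0 := by simpa [← h1] using h₁
      simpa using le_antisymm this (abs_nonneg _)
    have := hbd x₂ y₂ h₂ h2
    rw [← h1, hChat0, hx1]
    have h0 : |(0:ℝ) - Chat x₂ y₂| = |Chat x₂ y₂| := by rw [zero_sub, abs_neg]
    rw [h0]
    have hab : |(0:ℝ) - y₂| = y₂ := by rw [zero_sub, abs_neg, abs_of_pos h2]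
    rw [hab]
    nlinarith [abs_nonneg (0 - x₂), mul_nonneg hL (abs_nonneg (0 - x₂)),
      mul_nonneg (mul_nonneg hL hK) h2.le]
  · have hx2 : x₂ = 0 := by
      have : |x₂| ≤ 0 := by simpa [← h2] using h₂
      simpa using le_antisymm this (abs_nonneg _)
    have := hbd x₁ y₁ h₁ h1
    rw [← h2, hChat0, hx2]
    have h0 : |Chat x₁ y₁ - 0| = |Chat x₁ y₁| := by rw [sub_zero]
    rw [h0]
    have hab : |y₁ - (0:ℝ)| = y₁ := by rw [sub_zero, abs_of_pos h1]
    rw [hab]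
    nlinarith [abs_nonneg (x₁ - 0), mul_nonneg hL (abs_nonneg (x₁ - 0)),
      mul_nonneg (mul_nonneg hL hK) h1.le]
  · -- both positive
    rw [hChat x₁ y₁ h1.ne', hChat x₂ y₂ h2.ne']
    set a := x₁ / y₁ with ha
    set b := x₂ / y₂ with hb
    have key : C a * y₁ - C b * y₂ = (C a - C b) * y₁ + C b * (y₁ - y₂) := by ring
    rw [key]
    have hKb : |b| ≤ K := by
      rw [hb, abs_div, abs_of_pos h2, div_le_iff₀ h2, mul_comm]
      rwa [abs_of_pos h2] at h₂
    have hCb : |C b| ≤ M := hbound b hKb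
    -- bound |a - b| * y₁
    have hab : |a - b| * y₁ ≤ |x₁ - x₂| + K * |y₁ - y₂| := by
      have heq : (a - b) * y₁ = (x₁ - x₂) + (x₂ / y₂) * (y₂ - y₁) := by
        rw [ha, hb]; field_simp; ring
      have : |a - b| * y₁ = |(a - b) * y₁| := by
        rw [abs_mul, abs_of_pos h1]
      rw [this, heq]
      calc |(x₁ - x₂) + (x₂ / y₂) * (y₂ - y₁)|
          ≤ |x₁ - x₂| + |x₂ / y₂| * |y₂ - y₁| := by
            refine (abs_add_le _ _).trans ?_
            rw [abs_mul]
        _ ≤ |x₁ - x₂| + K * |y₁ - y₂| := by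
            rw [abs_sub_comm y₂ y₁]
            have hKb2 : |x₂ / y₂| ≤ K := by
              rw [abs_div, abs_of_pos h2, div_le_iff₀ h2, mul_comm]
              rwa [abs_of_pos h2] at h₂
            have := mul_le_mul_of_nonneg_right hKb2 (abs_nonneg (y₁ - y₂))
            linarith
    calc |(C a - C b) * y₁ + C b * (y₁ - y₂)|
        ≤ |C a - C b| * y₁ + |C b| * |y₁ - y₂| := by
          refine (abs_add_le _ _).trans ?_
          rw [abs_mul, abs_mul, abs_of_pos h1]
      _ ≤ (L * |a - b|) * y₁ + M * |y₁ - y₂| := by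
          gcongr
          exact hLip' a b
      _ = L * (|a - b| * y₁) + M * |y₁ - y₂| := by ring
      _ ≤ L * (|x₁ - x₂| + K * |y₁ - y₂|) + M * |y₁ - y₂| := by
          gcongr
      _ = L * |x₁ - x₂| + (M + L * K) * |y₁ - y₂| := by ring
end

section
/- Let B := {(x,y,z) ∈ ℝ³ : z ≥ 0, |x| ≤ z·K, |y| ≤ z} for a constant K ≥ 0, and for ε > 0 define C_ε : B → ℝ, C_ε(x,y,z) := x·y/(z+ε). Then for all (x₁,y₁,z₁), (x₂,y₂,z₂) ∈ B: |C_ε(x₁,y₁,z₁) − C_ε(x₂,y₂,z₂)| ≤ |x₁ − x₂| + K|y₁ − y₂| + K|z₁ − z₂|. -/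
theorem stmt10 (K ε : ℝ) (hK : 0 ≤ K) (hε : 0 < ε) :
    ∀ x₁ y₁ z₁ x₂ y₂ z₂ : ℝ,
      0 ≤ z₁ → |x₁| ≤ z₁ * K → |y₁| ≤ z₁ →
      0 ≤ z₂ → |x₂| ≤ z₂ * K → |y₂| ≤ z₂ →
      |x₁ * y₁ / (z₁ + ε) - x₂ * y₂ / (z₂ + ε)| ≤
        |x₁ - x₂| + K * |y₁ - y₂| + K * |z₁ - z₂| := by
  intro x₁ y₁ z₁ x₂ y₂ z₂ hz₁ hx₁ hy₁ hz₂ hx₂ hy₂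
  have ha : 0 < z₁ + ε := by linarith
  have hb : 0 < z₂ + ε := by linarith
  have key : x₁ * y₁ / (z₁ + ε) - x₂ * y₂ / (z₂ + ε) =
      (x₁ - x₂) * (y₁ / (z₁ + ε)) + (y₁ - y₂) * (x₂ / (z₂ + ε)) +
        (z₂ - z₁) * (x₂ * y₁ / ((z₁ + ε) * (z₂ + ε))) := by
    field_simp
    ring
  have h1 : |y₁ / (z₁ + ε)| ≤ 1 := by
    rw [abs_div, abs_of_pos ha, div_le_one ha]
    linarith
  have h2 : |x₂ / (z₂ + ε)| ≤ K := by
    rw [abs_div, abs_of_pos hb, div_le_iff₀ hb]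
    nlinarith
  have h3 : |x₂ * y₁ / ((z₁ + ε) * (z₂ + ε))| ≤ K := by
    rw [abs_div, abs_of_pos (mul_pos ha hb), div_le_iff₀ (mul_pos ha hb), abs_mul]
    have hmul : |x₂| * |y₁| ≤ z₂ * K * z₁ :=
      mul_le_mul hx₂ hy₁ (abs_nonneg _) (by nlinarith [abs_nonneg x₂])
    nlinarith [mul_nonneg (mul_nonneg hK hz₁) hε.le, mul_nonneg (mul_nonneg hK hz₂) hε.le,
      mul_nonneg (mul_nonneg hK hε.le) hε.le]
  calc |x₁ * y₁ / (z₁ + ε) - x₂ * y₂ / (z₂ + ε)|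
      ≤ |(x₁ - x₂) * (y₁ / (z₁ + ε))| + |(y₁ - y₂) * (x₂ / (z₂ + ε))| +
        |(z₂ - z₁) * (x₂ * y₁ / ((z₁ + ε) * (z₂ + ε)))| := by
        rw [key]; exact (abs_add_le _ _).trans (by gcongr; exact abs_add_le _ _)
    _ ≤ |x₁ - x₂| * 1 + |y₁ - y₂| * K + |z₂ - z₁| * K := by
        rw [abs_mul, abs_mul, abs_mul]
        gcongr <;> first | exact h1 | exact h2 | exact h3
    _ = |x₁ - x₂| + K * |y₁ - y₂| + K * |z₁ - z₂| := by
        rw [abs_sub_comm z₂ z₁]; ring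
end

section
/- Let W¹((−1,1)) = {f ∈ L²((−1,1)) : f' ∈ L²((−1,1))} (weak derivative) and W₀¹((−1,1)) = {f ∈ W¹((−1,1)) : f(−1) = f(1) = 0} (using the continuous representative). Define the Dirichlet form 𝓔 on L²((−1,1)) with domain W₀¹((−1,1)) by 𝓔(f) = ∫_{−1}^{1} |f'|² dλ + f(0)², the forms 𝓔₁ with domain W¹((−1,1)), 𝓔₁(f) = ∫|f'|² + (f(0) − f(1))², and 𝓔₂ with domain W¹((−1,1)), 𝓔₂(f) = ∫|f'|² + f(0)². Then there is no quadratic form Ẽ on L²((−1,1)) extending 𝓔 such that Ẽ ≤ 𝓔₁ and Ẽ ≤ 𝓔₂ in the sense of quadratic forms (i.e., D(𝓔ᵢ) ⊆ D(Ẽ) and Ẽ(f) ≤ 𝓔ᵢ(f) on D(𝓔ᵢ)) — in particular 𝓔 has no maximal Silverstein extension. -/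
open MeasureTheory ENNReal

/-- `f ∈ W¹((-1,1))` with weak derivative `g`: both are square integrable on
`(-1,1)` and `f` (its continuous representative) is given by the fundamental
theorem of calculus from `g`. -/
def SobDeriv (f g : ℝ → ℝ) : Prop :=
  MemLp f 2 (volume.restrict (Set.Ioo (-1 : ℝ) 1)) ∧
  MemLp g 2 (volume.restrict (Set.Ioo (-1 : ℝ) 1)) ∧
  ∀ x ∈ Set.Icc (-1 : ℝ) 1, f x = f (-1) + ∫ t in (-1)..x, g t

/-!
Let `u(x) = x² - 1 ∈ W₀¹`, so `Ẽ(u) = 𝓔(u) = 8/3 + 1`. The constant `1` has `𝓔₁(1) = 0`, hence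
`Ẽ(1) = 0`, and the parallelogram law gives `2 Ẽ(u) = Ẽ(1 + u) + Ẽ(1 - u)`. Bounding the first
term by `𝓔₂(x²) = 8/3` and the second by `𝓔₁(2 - x²) = 8/3 + 1` yields `22/3 ≤ 19/3`.
-/

theorem Continuous.memLp_two_restrict_Ioo {f : ℝ → ℝ} (hf : Continuous f) (a b : ℝ) :
    MemLp f 2 (volume.restrict (Set.Ioo a b)) := by
  rw [memLp_two_iff_integrable_sq hf.aestronglyMeasurable]
  exact (hf.pow 2).integrableOn_Icc.mono_set Set.Ioo_subset_Icc_self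

theorem sobDeriv_of_hasDerivAt {f f' : ℝ → ℝ} (hf : ∀ x, HasDerivAt f (f' x) x)
    (hf' : Continuous f') : SobDeriv f f' := by
  refine ⟨(continuous_iff_continuousAt.2 fun x => (hf x).continuousAt).memLp_two_restrict_Ioo _ _,
    hf'.memLp_two_restrict_Ioo _ _, fun x _ => ?_⟩
  rw [intervalIntegral.integral_eq_sub_of_hasDerivAt (fun y _ => hf y) (hf'.intervalIntegrable _ _)]
  ring

theorem two_mul_eq_add_of_parallelogram {V : Type*} [AddCommGroup V] {Q : V → ℝ≥0∞}
    (hpar : ∀ f g, Q (f + g) + Q (f - g) = 2 * Q f + 2 * Q g) {c : V} (hc : Q c = 0) (f : V) :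
    2 * Q f = Q (c + f) + Q (c - f) := by
  rw [hpar, hc, mul_zero, zero_add]

theorem integral_two_mul_sq : ∫ t in (-1 : ℝ)..1, (2 * t) ^ 2 = 8 / 3 := by
  norm_num [mul_pow, integral_pow]

theorem stmt11 :
    ¬ ∃ Et : (ℝ → ℝ) → ℝ≥0∞,
      -- Ẽ is a quadratic form
      (∀ (l : ℝ) (f : ℝ → ℝ), Et (l • f) = ENNReal.ofReal (l ^ 2) * Et f) ∧
      (∀ f g : ℝ → ℝ, Et (f + g) + Et (f - g) = 2 * Et f + 2 * Et g) ∧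
      -- Ẽ extends 𝓔 (which is defined on W₀¹((-1,1)))
      (∀ f g : ℝ → ℝ, SobDeriv f g → f (-1) = 0 → f 1 = 0 →
        Et f = ENNReal.ofReal (∫ t in (-1)..1, (g t) ^ 2) +
          ENNReal.ofReal ((f 0) ^ 2)) ∧
      -- Ẽ ≤ 𝓔₁ on D(𝓔₁) = W¹((-1,1))
      (∀ f g : ℝ → ℝ, SobDeriv f g →
        Et f ≤ ENNReal.ofReal (∫ t in (-1)..1, (g t) ^ 2) +
          ENNReal.ofReal ((f 0 - f 1) ^ 2)) ∧
      -- Ẽ ≤ 𝓔₂ on D(𝓔₂) = W¹((-1,1))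
      (∀ f g : ℝ → ℝ, SobDeriv f g →
        Et f ≤ ENNReal.ofReal (∫ t in (-1)..1, (g t) ^ 2) +
          ENNReal.ofReal ((f 0) ^ 2)) := by
  rintro ⟨Et, -, hpar, hext, h1, h2⟩
  set u : ℝ → ℝ := fun x => x ^ 2 - 1
  have hnull : Et (fun _ => 1) = 0 := by
    simpa using h1 _ _ (sobDeriv_of_hasDerivAt (fun x => hasDerivAt_const x 1) continuous_const)
  have hu : Et u = ENNReal.ofReal (8 / 3) + ENNReal.ofReal 1 := by
    have hderiv (x : ℝ) : HasDerivAt u (2 * x) x := by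
      simpa [u] using (hasDerivAt_pow 2 x).sub_const 1
    rw [hext u _ (sobDeriv_of_hasDerivAt hderiv (by fun_prop)) (by norm_num [u]) (by norm_num [u]),
      integral_two_mul_sq]
    norm_num [u]
  have hplus : Et ((fun _ => 1) + u) ≤ ENNReal.ofReal (8 / 3) := by
    have hsq : (fun _ => 1) + u = fun x => x ^ 2 := by funext x; simp [u]
    have h := h2 _ _ (sobDeriv_of_hasDerivAt (fun x => by simpa using hasDerivAt_pow 2 x) (by fun_prop))
    rw [integral_two_mul_sq] at h
    simpa [hsq] using h
  have hminus : Et ((fun _ => 1) - u) ≤ ENNReal.ofReal (8 / 3) + ENNReal.ofReal 1 := by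
    have hdiff : (fun _ => 1) - u = fun x => 2 - x ^ 2 := by funext x; simp [u]; ring
    have h := h1 _ _ (sobDeriv_of_hasDerivAt
      (fun x => by simpa using (hasDerivAt_pow 2 x).const_sub 2) (by fun_prop))
    simp only [neg_sq, integral_two_mul_sq] at h
    simpa [hdiff] using h
  have hle := (two_mul_eq_add_of_parallelogram hpar hnull u).trans_le (add_le_add hplus hminus)
  rw [hu, ← ENNReal.ofReal_add (by norm_num) (by norm_num),
    ← ENNReal.ofReal_add (by norm_num) (by norm_num), ← ENNReal.ofReal_ofNat 2,
    ← ENNReal.ofReal_mul (by norm_num), ENNReal.ofReal_le_ofReal_iff (by norm_num)] at hle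
  norm_num at hle
end

section
/- Let f ∈ W₀¹((−1,1)) with f(0) = 1, and let Ẽ be a quadratic form on L²((−1,1)) extending 𝓔 (where 𝓔(g) = ∫|g'|² + g(0)² on W₀¹((−1,1))) with Ẽ(1) = 0 and Ẽ(f − 1) ≤ ∫_{−1}^{1}|f'|² dλ. Then we get the contradiction ∫|f'|² + 1 ≤ ∫|f'|²; hence no such Ẽ exists. -/
/-!
The parallelogram law together with `Ẽ(1) = 0` makes `n ↦ Ẽ(v + n)` an arithmetic
progression indexed by `ℤ`. Once `Ẽ(v)` is finite, every term is finite and nonnegative, so the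
progression is constant and `Ẽ(v + 1) = Ẽ(v)`. For `v = f - 1` this gives
`∫ |f'|² + f(0)² = Ẽ(f) = Ẽ(f - 1) ≤ ∫ |f'|²`, which is impossible since `f(0) = 1`.
-/

open MeasureTheory ENNReal

theorem Int.sub_apply_eq_of_add_apply_sub_eq_two_mul {F : ℤ → ℝ}
    (hrec : ∀ n, F (n + 1) + F (n - 1) = 2 * F n) (n : ℤ) :
    F (n + 1) - F n = F 1 - F 0 := by
  induction n using Int.induction_on with
  | zero => simp
  | succ i ih =>
    have := hrec (i + 1)
    rw [add_sub_cancel_right] at this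
    linarith
  | pred i ih =>
    have := hrec (-i)
    rw [sub_add_cancel]
    linarith

theorem Int.apply_eq_of_add_apply_sub_eq_two_mul {F : ℤ → ℝ}
    (hrec : ∀ n, F (n + 1) + F (n - 1) = 2 * F n) (n : ℤ) :
    F n = F 0 + n * (F 1 - F 0) := by
  have hdiff := Int.sub_apply_eq_of_add_apply_sub_eq_two_mul hrec
  induction n using Int.induction_on with
  | zero => simp
  | succ i ih =>
    push_cast at ih ⊢
    linarith [hdiff i]
  | pred i ih =>
    have := hdiff (-i - 1)
    rw [sub_add_cancel] at this
    push_cast at ih ⊢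
    linarith

theorem Int.apply_one_eq_apply_zero_of_add_apply_sub_eq_two_mul_of_nonneg {F : ℤ → ℝ}
    (hrec : ∀ n, F (n + 1) + F (n - 1) = 2 * F n) (hF : ∀ n, 0 ≤ F n) : F 1 = F 0 := by
  have hF_eq := Int.apply_eq_of_add_apply_sub_eq_two_mul hrec
  set d := F 1 - F 0
  rcases lt_trichotomy d 0 with hd | hd | hd
  · obtain ⟨n, hn⟩ := exists_nat_gt (F 0 / -d)
    have hn' := (div_lt_iff₀ (neg_pos.2 hd)).1 hn
    have := hF n
    rw [hF_eq] at this
    push_cast at this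
    linarith
  · linarith
  · obtain ⟨n, hn⟩ := exists_nat_gt (F 0 / d)
    have hn' := (div_lt_iff₀ hd).1 hn
    have := hF (-n)
    rw [hF_eq] at this
    push_cast at this
    linarith

section Parallelogram

variable {V : Type*} [AddCommGroup V] {q : V → ℝ≥0∞} {u v : V}

theorem add_add_one_zsmul_add_add_sub_one_zsmul_of_parallelogram
    (hpar : ∀ h k, q (h + k) + q (h - k) = 2 * q h + 2 * q k)
    (hu : q u = 0) (m : ℤ) :
    q (v + (m + 1) • u) + q (v + (m - 1) • u) = 2 * q (v + m • u) := by
  simpa [hu, add_zsmul, sub_zsmul, add_assoc, sub_eq_add_neg] using hpar (v + m • u) u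

theorem add_zsmul_ne_top_of_parallelogram
    (hpar : ∀ h k, q (h + k) + q (h - k) = 2 * q h + 2 * q k)
    (hu : q u = 0) (hv : q v ≠ ⊤) (n : ℤ) : q (v + n • u) ≠ ⊤ := by
  have hfin (m : ℤ) (hm : q (v + m • u) ≠ ⊤) :
      q (v + (m + 1) • u) ≠ ⊤ ∧ q (v + (m - 1) • u) ≠ ⊤ := by
    rw [← ENNReal.add_ne_top, add_add_one_zsmul_add_add_sub_one_zsmul_of_parallelogram hpar hu]
    exact ENNReal.mul_ne_top ENNReal.ofNat_ne_top hm
  induction n using Int.induction_on with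
  | zero => simpa using hv
  | succ i ih => exact (hfin i ih).1
  | pred i ih => exact (hfin (-i) ih).2

theorem add_eq_of_parallelogram_of_eq_zero
    (hpar : ∀ h k, q (h + k) + q (h - k) = 2 * q h + 2 * q k)
    (hu : q u = 0) (hv : q v ≠ ⊤) : q (v + u) = q v := by
  have hfin := add_zsmul_ne_top_of_parallelogram hpar hu hv
  have hrec (m : ℤ) : (q (v + (m + 1) • u)).toReal + (q (v + (m - 1) • u)).toReal =
      2 * (q (v + m • u)).toReal := by
    rw [← ENNReal.toReal_add (hfin _) (hfin _),
      add_add_one_zsmul_add_add_sub_one_zsmul_of_parallelogram hpar hu, ENNReal.toReal_mul,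
      ENNReal.toReal_ofNat]
  have := Int.apply_one_eq_apply_zero_of_add_apply_sub_eq_two_mul_of_nonneg
    (F := fun m : ℤ => (q (v + m • u)).toReal) hrec
    fun _ => ENNReal.toReal_nonneg
  rwa [one_zsmul, zero_zsmul, add_zero, ENNReal.toReal_eq_toReal_iff' (by simpa using hfin 1) hv]
    at this

end Parallelogram

theorem stmt12_general (f g : ℝ → ℝ) (hfg : SobDeriv f g)
    (hbdry : f (-1) = 0 ∧ f 1 = 0) (hf0 : f 0 = 1)
    (Et : (ℝ → ℝ) → ℝ≥0∞)
    -- Ẽ is a quadratic form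
    (hpar : ∀ h k : ℝ → ℝ, Et (h + k) + Et (h - k) = 2 * Et h + 2 * Et k)
    -- Ẽ extends 𝓔 on W₀¹((-1,1))
    (hext : ∀ h k : ℝ → ℝ, SobDeriv h k → h (-1) = 0 → h 1 = 0 →
      Et h = ENNReal.ofReal (∫ t in (-1)..1, (k t) ^ 2) +
        ENNReal.ofReal ((h 0) ^ 2))
    -- Ẽ(1) = 0
    (hone : Et (fun _ => (1 : ℝ)) = 0)
    -- Ẽ(f - 1) ≤ ∫ |f'|²
    (hle : Et (f - fun _ => (1 : ℝ)) ≤ ENNReal.ofReal (∫ t in (-1)..1, (g t) ^ 2)) :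
    False := by
  have hEf : Et f = ENNReal.ofReal (∫ t in (-1)..1, (g t) ^ 2) + 1 := by
    rw [hext f g hfg hbdry.1 hbdry.2, hf0, one_pow, ENNReal.ofReal_one]
  have hshift : Et f = Et (f - fun _ => (1 : ℝ)) := by
    simpa only [sub_add_cancel] using
      add_eq_of_parallelogram_of_eq_zero hpar hone (ne_top_of_le_ne_top ofReal_ne_top hle)
  rw [← hshift, hEf] at hle
  exact (ENNReal.lt_add_right ofReal_ne_top one_ne_zero).not_ge hle

theorem stmt12 (f g : ℝ → ℝ) (hfg : SobDeriv f g)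
    (hbdry : f (-1) = 0 ∧ f 1 = 0) (hf0 : f 0 = 1)
    (Et : (ℝ → ℝ) → ℝ≥0∞)
    -- Ẽ is a quadratic form
    (hhom : ∀ (l : ℝ) (h : ℝ → ℝ), Et (l • h) = ENNReal.ofReal (l ^ 2) * Et h)
    (hpar : ∀ h k : ℝ → ℝ, Et (h + k) + Et (h - k) = 2 * Et h + 2 * Et k)
    -- Ẽ extends 𝓔 on W₀¹((-1,1))
    (hext : ∀ h k : ℝ → ℝ, SobDeriv h k → h (-1) = 0 → h 1 = 0 →
      Et h = ENNReal.ofReal (∫ t in (-1)..1, (k t) ^ 2) +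
        ENNReal.ofReal ((h 0) ^ 2))
    -- Ẽ(1) = 0
    (hone : Et (fun _ => (1 : ℝ)) = 0)
    -- Ẽ(f - 1) ≤ ∫ |f'|²
    (hle : Et (f - fun _ => (1 : ℝ)) ≤ ENNReal.ofReal (∫ t in (-1)..1, (g t) ^ 2)) :
    False :=
  stmt12_general f g hfg hbdry hf0 Et hpar hext hone hle
end

section
/- Let (q_i)_{i ∈ I} be a family of quadratic forms on a real vector space V, directed upward in the sense that for any i, j ∈ I there is k ∈ I with q_i(f) ≤ q_k(f) and q_j(f) ≤ q_k(f) for all f ∈ V. Then the pointwise supremum Q(f) := sup_{i ∈ I} q_i(f) is again a quadratic form on V. -/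
open ENNReal

theorem stmt14 {V : Type*} [AddCommGroup V] [Module ℝ V]
    {ι : Type*} (q : ι → V → ℝ≥0∞)
    (hhom : ∀ i (l : ℝ) (f : V), q i (l • f) = ENNReal.ofReal (l ^ 2) * q i f)
    (hpar : ∀ i (f g : V), q i (f + g) + q i (f - g) = 2 * q i f + 2 * q i g)
    (hdir : ∀ i j : ι, ∃ k : ι, (∀ f : V, q i f ≤ q k f) ∧ ∀ f : V, q j f ≤ q k f) :
    (∀ (l : ℝ) (f : V), (⨆ i, q i (l • f)) = ENNReal.ofReal (l ^ 2) * ⨆ i, q i f) ∧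
      ∀ f g : V, (⨆ i, q i (f + g)) + (⨆ i, q i (f - g)) =
        2 * (⨆ i, q i f) + 2 * ⨆ i, q i g := by
  constructor
  · intro l f
    simp only [hhom, ENNReal.mul_iSup]
  · intro f g
    rw [ENNReal.iSup_add_iSup (fun i j => by
        obtain ⟨k, hi, hj⟩ := hdir i j
        exact ⟨k, add_le_add (hi _) (hj _)⟩)]
    simp only [hpar]
    rw [← ENNReal.iSup_add_iSup (fun i j => by
        obtain ⟨k, hi, hj⟩ := hdir i j
        exact ⟨k, add_le_add (mul_le_mul_right (hi _) 2) (mul_le_mul_right (hj _) 2)⟩),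
      ENNReal.mul_iSup, ENNReal.mul_iSup]
end
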